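/- arXiv:1907.02446 — 2 statements merged into one kernel-verified Lean document; each statement's English description precedes it below -/
import Mathlib

section
/- If the hyperspace system (2^X, 2^f) has orbital shadowing, then (X,f) has orbital shadowing. -/
open Filter Topology TopologicalSpace

/-- The induced map on the hyperspace of nonempty compact subsets. -/
def hyperMap {X : Type*} [MetricSpace X] (f : X → X) (hf : Continuous f) :
    NonemptyCompacts X → NonemptyCompacts X :=
  fun A => ⟨⟨f '' A, A.isCompact.image hf⟩, A.nonempty.image f⟩

/-- Singleton as a nonempty compact set. -/
def singNC {X : Type*} [MetricSpace X] (a : X) : NonemptyCompacts X :=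
  ⟨⟨{a}, isCompact_singleton⟩, Set.singleton_nonempty a⟩

lemma singNC_coe {X : Type*} [MetricSpace X] (a : X) :
    ((singNC a : NonemptyCompacts X) : Set X) = {a} := rfl

lemma dist_singNC_le {X : Type*} [MetricSpace X] (a b : X) :
    dist (singNC a) (singNC b) ≤ dist a b := by
  rw [Metric.NonemptyCompacts.dist_eq]
  apply Metric.hausdorffDist_le_of_mem_dist dist_nonneg
  · intro c hc
    rw [singNC_coe, Set.mem_singleton_iff] at hc
    subst hc
    exact ⟨b, rfl, le_refl _⟩
  · intro c hc
    rw [singNC_coe, Set.mem_singleton_iff] at hc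
    subst hc
    exact ⟨a, rfl, by rw [dist_comm]⟩

lemma hyperMap_iterate_coe {X : Type*} [MetricSpace X] (f : X → X) (hf : Continuous f)
    (B : NonemptyCompacts X) (i : ℕ) :
    (((hyperMap f hf)^[i] B : NonemptyCompacts X) : Set X) = f^[i] '' (B : Set X) := by
  induction i with
  | zero => simp
  | succ n ih =>
    rw [Function.iterate_succ_apply']
    show f '' (((hyperMap f hf)^[n] B : NonemptyCompacts X) : Set X) = _
    rw [ih, ← Set.image_comp, ← Function.iterate_succ']

/-- From Hausdorff distance of a compact set to a singleton, estimate a pointwise distance. -/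
lemma dist_of_dist_singNC_lt {X : Type*} [MetricSpace X] {C : NonemptyCompacts X} {b c : X}
    {r : ℝ} (hc : c ∈ (C : Set X)) (h : dist C (singNC b) < r) : dist c b < r := by
  rw [Metric.NonemptyCompacts.dist_eq] at h
  have hfin : EMetric.hausdorffEdist ((C : Set X)) ((singNC b : NonemptyCompacts X) : Set X) ≠ ⊤ :=
    Metric.hausdorffEdist_ne_top_of_nonempty_of_bounded C.nonempty (singNC b).nonempty
      C.isCompact.isBounded (singNC b).isCompact.isBounded
  obtain ⟨y, hy, hyd⟩ := Metric.exists_dist_lt_of_hausdorffDist_lt hc h hfin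
  rw [singNC_coe, Set.mem_singleton_iff] at hy
  subst hy
  exact hyd

/-- if the hyperspace system (2ˣ, 2ᶠ) has orbital shadowing, then (X, f)
has orbital shadowing. -/
theorem orbitalShadowing_of_hyperspace_orbitalShadowing
    {X : Type*} [MetricSpace X] [CompactSpace X]
    (f : X → X) (hf : Continuous f)
    (hsh : ∀ ε > (0:ℝ), ∃ δ > (0:ℝ), ∀ A : ℕ → NonemptyCompacts X,
      (∀ i, dist (hyperMap f hf (A i)) (A (i + 1)) < δ) →
      ∃ B : NonemptyCompacts X,
        Metric.hausdorffDist (closure (Set.range A))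
          (closure (Set.range fun i => (hyperMap f hf)^[i] B)) < ε) :
    ∀ ε > (0:ℝ), ∃ δ > (0:ℝ), ∀ x : ℕ → X,
      (∀ i, dist (f (x i)) (x (i + 1)) < δ) →
      ∃ z : X,
        Metric.hausdorffDist (closure (Set.range x))
          (closure (Set.range fun i => f^[i] z)) < ε := by
  intro ε hε
  obtain ⟨δ, hδ, H⟩ := hsh (ε / 3) (by linarith)
  refine ⟨δ, hδ, ?_⟩
  intro x hx
  set A : ℕ → NonemptyCompacts X := fun i => singNC (x i) with hA
  have hAo : ∀ i, dist (hyperMap f hf (A i)) (A (i + 1)) < δ := by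
    intro i
    have he : hyperMap f hf (A i) = singNC (f (x i)) := by
      apply NonemptyCompacts.ext
      simp [hyperMap, hA, singNC]
    rw [he]
    exact lt_of_le_of_lt (dist_singNC_le _ _) (hx i)
  obtain ⟨B, hB⟩ := H A hAo
  obtain ⟨z, hz⟩ := B.nonempty
  refine ⟨z, ?_⟩
  set C : ℕ → NonemptyCompacts X := fun i => (hyperMap f hf)^[i] B with hC
  have hne : EMetric.hausdorffEdist (closure (Set.range A)) (closure (Set.range C)) ≠ ⊤ :=
    Metric.hausdorffEdist_ne_top_of_nonempty_of_bounded
      (Set.range_nonempty A).closure (Set.range_nonempty C).closure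
      Metric.isBounded_of_compactSpace Metric.isBounded_of_compactSpace
  have hmemz : ∀ i, f^[i] z ∈ (C i : Set X) := by
    intro i
    rw [hC]
    simp only
    rw [hyperMap_iterate_coe]
    exact ⟨z, hz, rfl⟩
  -- Key claim 1: every orbit point of z is within 2ε/3 of some x j
  have claim1 : ∀ i : ℕ, ∃ j : ℕ, dist (f^[i] z) (x j) ≤ 2 * ε / 3 := by
    intro i
    have hCi : C i ∈ closure (Set.range C) := subset_closure ⟨i, rfl⟩
    obtain ⟨D, hD, hDd⟩ := Metric.exists_dist_lt_of_hausdorffDist_lt' hCi hB hne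
    obtain ⟨A', ⟨j, rfl⟩, hA'd⟩ := Metric.mem_closure_iff.1 hD (ε / 3) (by linarith)
    refine ⟨j, le_of_lt (dist_of_dist_singNC_lt (hmemz i) ?_)⟩
    calc dist (C i) (A j) ≤ dist (C i) D + dist D (A j) := dist_triangle _ _ _
      _ < ε / 3 + ε / 3 := add_lt_add (by rw [dist_comm]; exact hDd) hA'd
      _ = 2 * ε / 3 := by ring
  -- Key claim 2: every x j is within 2ε/3 of some orbit point of z
  have claim2 : ∀ j : ℕ, ∃ i : ℕ, dist (x j) (f^[i] z) ≤ 2 * ε / 3 := by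
    intro j
    have hAj : A j ∈ closure (Set.range A) := subset_closure ⟨j, rfl⟩
    obtain ⟨E, hE, hEd⟩ := Metric.exists_dist_lt_of_hausdorffDist_lt hAj hB hne
    obtain ⟨C', ⟨i, rfl⟩, hC'd⟩ := Metric.mem_closure_iff.1 hE (ε / 3) (by linarith)
    have hdist : dist (C i) (A j) < 2 * ε / 3 := by
      calc dist (C i) (A j) ≤ dist (C i) E + dist E (A j) := dist_triangle _ _ _
        _ < ε / 3 + ε / 3 :=
            add_lt_add (by rw [dist_comm]; exact hC'd) (by rw [dist_comm]; exact hEd)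
        _ = 2 * ε / 3 := by ring
    refine ⟨i, ?_⟩
    rw [dist_comm]
    exact le_of_lt (dist_of_dist_singNC_lt (hmemz i) hdist)
  -- conclude
  rw [Metric.hausdorffDist_closure]
  calc Metric.hausdorffDist (Set.range x) (Set.range fun i => f^[i] z)
      ≤ 2 * ε / 3 := by
        apply Metric.hausdorffDist_le_of_mem_dist (by linarith)
        · rintro _ ⟨j, rfl⟩
          obtain ⟨i, hi⟩ := claim2 j
          exact ⟨f^[i] z, ⟨i, rfl⟩, hi⟩
        · rintro _ ⟨i, rfl⟩
          obtain ⟨j, hj⟩ := claim1 i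
          exact ⟨x j, ⟨j, rfl⟩, hj⟩
    _ < ε := by linarith
end

section
/- If (X,f) has limit shadowing, then the induced system (F_2(X), f_2) on the 2-fold symmetric product has limit shadowing. -/
open Filter Topology TopologicalSpace

/-- A member of the 2-fold symmetric product `F₂(X)`. -/
def IsF2 {X : Type*} [MetricSpace X] (A : NonemptyCompacts X) : Prop :=
  ∃ a b : X, (A : Set X) = {a, b}

/-!
A pseudo-orbit of pairs `A i = {aᵢ, bᵢ}` can be labelled, one step at a time, so that
`f aᵢ` is matched with `aᵢ₊₁` and `f bᵢ` with `bᵢ₊₁` within the Hausdorff error of the step: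
two-point sets at Hausdorff distance `≤ r` can be matched pointwise within `r`.
The two label sequences are then asymptotic pseudo-orbits of `f`, each is shadowed by a
point, and the pair of shadowing points shadows `A`.
-/

theorem exists_seq_of_forall_exists_succ {α : Type*} {P : ℕ → α → Prop}
    {R : ℕ → α → α → Prop} (h₀ : ∃ a, P 0 a)
    (hstep : ∀ n a, P n a → ∃ b, P (n + 1) b ∧ R n a b) :
    ∃ s : ℕ → α, ∀ n, P n (s n) ∧ R n (s n) (s (n + 1)) := by
  have hstep' : ∀ n (a : {a // P n a}), ∃ b : {b // P (n + 1) b}, R n a b :=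
    fun n a => let ⟨b, hb, hR⟩ := hstep n a a.2; ⟨⟨b, hb⟩, hR⟩
  choose g hg using hstep'
  obtain ⟨a₀, ha₀⟩ := h₀
  let s : (n : ℕ) → {a // P n a} := fun n => Nat.rec ⟨a₀, ha₀⟩ g n
  exact ⟨fun n => (s n).1, fun n => ⟨(s n).2, hg n (s n)⟩⟩

namespace Metric

variable {X : Type*} [PseudoMetricSpace X]

theorem infDist_pair (p u v : X) : infDist p {u, v} = min (dist p u) (dist p v) := by
  rw [infDist, Set.insert_eq, infEDist_union, infEDist_singleton, infEDist_singleton,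
    edist_dist, edist_dist, ← ENNReal.ofReal_min, ENNReal.toReal_ofReal (by positivity)]

theorem hausdorffDist_pair_pair_le_iff {x y u v : X} {r : ℝ} :
    hausdorffDist {x, y} {u, v} ≤ r ↔
      (dist x u ≤ r ∧ dist y v ≤ r) ∨ (dist x v ≤ r ∧ dist y u ≤ r) := by
  constructor
  · intro h
    have hfin : hausdorffEDist ({x, y} : Set X) {u, v} ≠ ⊤ :=
      hausdorffEDist_ne_top_of_nonempty_of_bounded (Set.insert_nonempty _ _)
        (Set.insert_nonempty _ _) (Set.toFinite _).isBounded (Set.toFinite _).isBounded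
    have hleft : ∀ p ∈ ({x, y} : Set X), min (dist p u) (dist p v) ≤ r := fun p hp =>
      infDist_pair p u v ▸ (infDist_le_hausdorffDist_of_mem hp hfin).trans h
    have hright : ∀ q ∈ ({u, v} : Set X), min (dist x q) (dist y q) ≤ r := fun q hq => by
      rw [dist_comm x, dist_comm y, ← infDist_pair]
      exact (infDist_le_hausdorffDist_of_mem hq (by rwa [hausdorffEDist_comm])).trans
        (by rwa [hausdorffDist_comm])
    have hx := hleft x (by simp)
    have hy := hleft y (by simp)
    have hu := hright u (by simp)
    have hv := hright v (by simp)
    simp only [min_le_iff] at hx hy hu hv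
    tauto
  · suffices key : ∀ {u v : X}, dist x u ≤ r → dist y v ≤ r →
        hausdorffDist {x, y} {u, v} ≤ r by
      rintro (⟨hxu, hyv⟩ | ⟨hxv, hyu⟩)
      · exact key hxu hyv
      · exact Set.pair_comm u v ▸ key hxv hyu
    intro u v hxu hyv
    refine hausdorffDist_le_of_mem_dist (dist_nonneg.trans hxu) ?_ ?_
    · rintro p (rfl | rfl)
      exacts [⟨u, by simp, hxu⟩, ⟨v, by simp, hyv⟩]
    · rintro q (rfl | rfl)
      exacts [⟨x, by simp, by rwa [dist_comm]⟩, ⟨y, by simp, by rwa [dist_comm]⟩]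

end Metric

open Metric

section HyperMap

variable {X : Type*} [MetricSpace X] {f : X → X} {hf : Continuous f}

theorem coe_hyperMap (A : NonemptyCompacts X) : (hyperMap f hf A : Set X) = f '' A := rfl

theorem coe_hyperMap_iterate (n : ℕ) (A : NonemptyCompacts X) :
    ((hyperMap f hf)^[n] A : Set X) = f^[n] '' A := by
  induction n with
  | zero => simp
  | succ n ih =>
    rw [Function.iterate_succ_apply', coe_hyperMap, ih, ← Set.image_comp,
      ← Function.iterate_succ']

theorem exists_pair_dist_le_dist_hyperMap {A A' : NonemptyCompacts X} {a b : X}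
    (hA : (A : Set X) = {a, b}) (hA' : IsF2 A') :
    ∃ q : X × X, (A' : Set X) = {q.1, q.2} ∧
      dist (f a) q.1 ≤ dist (hyperMap f hf A) A' ∧ dist (f b) q.2 ≤ dist (hyperMap f hf A) A' := by
  obtain ⟨u, v, hA'⟩ := hA'
  have h := (NonemptyCompacts.dist_eq (x := hyperMap f hf A) (y := A')).ge
  rw [coe_hyperMap, hA, Set.image_pair, hA', hausdorffDist_pair_pair_le_iff] at h
  rcases h with ⟨hu, hv⟩ | ⟨hv, hu⟩
  · exact ⟨(u, v), hA', hu, hv⟩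
  · exact ⟨(v, u), hA'.trans (Set.pair_comm u v), hv, hu⟩

end HyperMap

theorem limitShadowing_F2_of_limitShadowing_general
    {X : Type*} [MetricSpace X]
    (f : X → X) (hf : Continuous f)
    (hsh : ∀ x : ℕ → X,
      Tendsto (fun i => dist (f (x i)) (x (i + 1))) atTop (nhds 0) →
      ∃ z : X, Tendsto (fun i => dist (f^[i] z) (x i)) atTop (nhds 0)) :
    ∀ A : ℕ → NonemptyCompacts X, (∀ i, IsF2 (A i)) →
      Tendsto (fun i => dist (hyperMap f hf (A i)) (A (i + 1))) atTop (nhds 0) →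
      ∃ B : NonemptyCompacts X, IsF2 B ∧
        Tendsto (fun i => dist ((hyperMap f hf)^[i] B) (A i)) atTop (nhds 0) := by
  intro A hA hpo
  obtain ⟨c, hc⟩ := exists_seq_of_forall_exists_succ
    (P := fun i (p : X × X) => (A i : Set X) = {p.1, p.2})
    (R := fun i p q => dist (f p.1) q.1 ≤ dist (hyperMap f hf (A i)) (A (i + 1)) ∧
      dist (f p.2) q.2 ≤ dist (hyperMap f hf (A i)) (A (i + 1)))
    (let ⟨a, b, h⟩ := hA 0; ⟨(a, b), h⟩)
    (fun i _ hp => exists_pair_dist_le_dist_hyperMap hp (hA (i + 1)))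
  obtain ⟨z, hz⟩ := hsh (fun i => (c i).1)
    (squeeze_zero (fun _ => dist_nonneg) (fun i => (hc i).2.1) hpo)
  obtain ⟨w, hw⟩ := hsh (fun i => (c i).2)
    (squeeze_zero (fun _ => dist_nonneg) (fun i => (hc i).2.2) hpo)
  have hzw : (({z} ⊔ {w} : NonemptyCompacts X) : Set X) = {z, w} := by
    rw [NonemptyCompacts.coe_sup, NonemptyCompacts.coe_singleton,
      NonemptyCompacts.coe_singleton, Set.singleton_union]
  refine ⟨{z} ⊔ {w}, ⟨z, w, hzw⟩, squeeze_zero (fun _ => dist_nonneg) (fun i => ?_)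
    (by simpa using hz.max hw)⟩
  rw [NonemptyCompacts.dist_eq, coe_hyperMap_iterate, hzw, Set.image_pair, (hc i).1]
  exact hausdorffDist_pair_pair_le_iff.2 (Or.inl ⟨le_max_left _ _, le_max_right _ _⟩)

/-- limit shadowing of (X, f) implies limit shadowing of the induced
system on the 2-fold symmetric product F₂(X). -/
theorem limitShadowing_F2_of_limitShadowing
    {X : Type*} [MetricSpace X] [CompactSpace X]
    (f : X → X) (hf : Continuous f)
    (hsh : ∀ x : ℕ → X,
      Tendsto (fun i => dist (f (x i)) (x (i + 1))) atTop (nhds 0) →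
      ∃ z : X, Tendsto (fun i => dist (f^[i] z) (x i)) atTop (nhds 0)) :
    ∀ A : ℕ → NonemptyCompacts X, (∀ i, IsF2 (A i)) →
      Tendsto (fun i => dist (hyperMap f hf (A i)) (A (i + 1))) atTop (nhds 0) →
      ∃ B : NonemptyCompacts X, IsF2 B ∧
        Tendsto (fun i => dist ((hyperMap f hf)^[i] B) (A i)) atTop (nhds 0) :=
  limitShadowing_F2_of_limitShadowing_general f hf hsh
end
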